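/- For k ∈ ℤ define u_k = (2+√3)^k − (2−√3)^k. Let a, b be real numbers with a ≠ 0, let N ≥ 1, and assume u_n + u_{n-1}·a ≠ 0 for every 1 ≤ n ≤ N. Define sequences (A_n) and (B_n) by A_1 = a, B_1 = b; A_2 = −a/(4+a), B_2 = 4b/(4+a); and for 2 ≤ n ≤ N−1: A_{n+1} = −A_n/(4 + A_n/A_{n-1}) and B_{n+1} = [4·B_n + (A_n/A_{n-1})·B_{n-1}]/(4 + A_n/A_{n-1}). Then for every 1 ≤ n ≤ N these recursions are well defined (all denominators are nonzero, and A_n ≠ 0), and A_n = (−1)^{n-1}·u_1·a/(u_n + u_{n-1}·a), B_n = u_n·b/(u_n + u_{n-1}·a). -/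

import Mathlib

/-!
With `D_n = u_n + u_{n-1} a`, both `u` and `D` satisfy `x_{n+2} = 4 x_{n+1} - x_n`, because
`2 ± √3` are the roots of `x² - 4x + 1`. For the closed forms, consecutive quotients are
`A_{n+1} / A_n = -D_n / D_{n+1}`, hence `4 + A_{n+1} / A_n = D_{n+2} / D_{n+1}`; substituting
this, the recursions for `A` and `B` reduce to the recurrences for `D` and `u`. A two-step
induction then identifies the sequences with their closed forms.
-/

/-- The sequence `u_k = (2+√3)^k − (2−√3)^k`, indexed by the integers. -/
noncomputable def uSeq (k : ℤ) : ℝ :=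
  (2 + Real.sqrt 3) ^ k - (2 - Real.sqrt 3) ^ k

open Real

theorem zpow_add_two_of_sq_eq {K : Type*} [Field K] {x t s : K} (hx : x ≠ 0)
    (h : x ^ 2 = t * x - s) (k : ℤ) : x ^ (k + 2) = t * x ^ (k + 1) - s * x ^ k := by
  rw [zpow_add₀ hx, zpow_add_one₀ hx, zpow_two, ← sq, h]
  ring

lemma uSeq_add_two (k : ℤ) : uSeq (k + 2) = 4 * uSeq (k + 1) - uSeq k := by
  have hsq : √3 ^ 2 = 3 := sq_sqrt (by norm_num)
  have hp : 2 + √3 ≠ 0 := by positivity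
  have hq : 2 - √3 ≠ 0 := by
    intro h
    nlinarith
  rw [uSeq, uSeq, uSeq, zpow_add_two_of_sq_eq (t := 4) (s := 1) hp (by linear_combination hsq) k,
    zpow_add_two_of_sq_eq (t := 4) (s := 1) hq (by linear_combination hsq) k]
  ring

lemma uSeq_zero : uSeq 0 = 0 := by simp [uSeq]

lemma uSeq_one : uSeq 1 = 2 * √3 := by simp [uSeq]; ring

lemma uSeq_one_ne_zero : uSeq 1 ≠ 0 := by
  rw [uSeq_one]; positivity

lemma uSeq_two : uSeq 2 = 4 * uSeq 1 := by
  simpa [uSeq_zero] using uSeq_add_two 0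

namespace ForwardCoeff

noncomputable def den (a : ℝ) (n : ℕ) : ℝ := uSeq n + uSeq ((n : ℤ) - 1) * a

noncomputable def closedA (a : ℝ) (n : ℕ) : ℝ := (-1) ^ (n - 1) * uSeq 1 * a / den a n

noncomputable def closedB (a b : ℝ) (n : ℕ) : ℝ := uSeq n * b / den a n

variable {a : ℝ}

lemma den_add_two (n : ℕ) : den a (n + 2) = 4 * den a (n + 1) - den a n := by
  have h₁ := uSeq_add_two n
  have h₂ := uSeq_add_two (n - 1)
  simp only [den, Nat.cast_add, Nat.cast_ofNat, Nat.cast_one]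
  rw [show (n : ℤ) - 1 + 2 = n + 1 by ring, show (n : ℤ) - 1 + 1 = n by ring] at h₂
  rw [show (n : ℤ) + 2 - 1 = n + 1 by ring, add_sub_cancel_right]
  linear_combination h₁ + a * h₂

lemma den_one : den a 1 = uSeq 1 := by simp [den, uSeq_zero]

lemma den_two : den a 2 = uSeq 1 * (4 + a) := by
  simp only [den, Nat.cast_ofNat, show (2 : ℤ) - 1 = 1 by norm_num, uSeq_two]
  ring

lemma closedA_ne_zero (ha : a ≠ 0) {n : ℕ} (hn : den a n ≠ 0) : closedA a n ≠ 0 := by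
  have := uSeq_one_ne_zero
  unfold closedA
  positivity

lemma closedA_one : closedA a 1 = a := by
  simp [closedA, den_one, uSeq_one_ne_zero]

lemma closedB_one (b : ℝ) : closedB a b 1 = b := by
  simp [closedB, den_one, uSeq_one_ne_zero]

lemma closedA_two (h : 4 + a ≠ 0) : closedA a 2 = -a / (4 + a) := by
  have := uSeq_one_ne_zero
  rw [closedA, den_two]
  field_simp
  ring

lemma closedB_two (b : ℝ) (h : 4 + a ≠ 0) : closedB a b 2 = 4 * b / (4 + a) := by
  have := uSeq_one_ne_zero
  rw [closedB, den_two, Nat.cast_ofNat, uSeq_two]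
  field_simp

lemma closedA_ratio (ha : a ≠ 0) (n : ℕ) (hn : den a (n + 1) ≠ 0) :
    closedA a (n + 2) / closedA a (n + 1) = -den a (n + 1) / den a (n + 2) := by
  have := uSeq_one_ne_zero
  simp only [closedA, Nat.add_one_sub_one, pow_succ]
  field_simp

lemma four_add_closedA_ratio (ha : a ≠ 0) (n : ℕ) (h₁ : den a (n + 1) ≠ 0)
    (h₂ : den a (n + 2) ≠ 0) :
    4 + closedA a (n + 2) / closedA a (n + 1) = den a (n + 3) / den a (n + 2) := by
  rw [closedA_ratio ha n h₁, den_add_two (n + 1)]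
  field_simp
  ring

lemma closedA_add_three (ha : a ≠ 0) (n : ℕ) (h₁ : den a (n + 1) ≠ 0) (h₂ : den a (n + 2) ≠ 0) :
    closedA a (n + 3) =
      -closedA a (n + 2) / (4 + closedA a (n + 2) / closedA a (n + 1)) := by
  rw [four_add_closedA_ratio ha n h₁ h₂]
  simp only [closedA, Nat.add_one_sub_one, pow_succ]
  field_simp

lemma closedB_add_three (ha : a ≠ 0) (b : ℝ) (n : ℕ) (h₁ : den a (n + 1) ≠ 0)
    (h₂ : den a (n + 2) ≠ 0) :
    closedB a b (n + 3) =
      (4 * closedB a b (n + 2) + closedA a (n + 2) / closedA a (n + 1) * closedB a b (n + 1)) /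
        (4 + closedA a (n + 2) / closedA a (n + 1)) := by
  rw [four_add_closedA_ratio ha n h₁ h₂, closedA_ratio ha n h₁]
  have hu := uSeq_add_two (n + 1)
  simp only [closedB]
  push_cast at hu ⊢
  rw [show (n : ℤ) + 1 + 2 = n + 3 by ring, show (n : ℤ) + 1 + 1 = n + 2 by ring] at hu
  rw [hu]
  field_simp
  ring

end ForwardCoeff

open ForwardCoeff in
theorem forward_coefficients_closed_form_general
    (a b : ℝ) (ha : a ≠ 0) (N : ℕ)
    (hden : ∀ n : ℕ, 1 ≤ n → n ≤ N → uSeq (n : ℤ) + uSeq ((n : ℤ) - 1) * a ≠ 0)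
    (A B : ℕ → ℝ)
    (hA1 : A 1 = a) (hB1 : B 1 = b)
    (hA2 : 2 ≤ N → A 2 = -a / (4 + a))
    (hB2 : 2 ≤ N → B 2 = 4 * b / (4 + a))
    (hArec : ∀ n : ℕ, 2 ≤ n → n ≤ N - 1 →
      A (n + 1) = -A n / (4 + A n / A (n - 1)))
    (hBrec : ∀ n : ℕ, 2 ≤ n → n ≤ N - 1 →
      B (n + 1) = (4 * B n + (A n / A (n - 1)) * B (n - 1)) / (4 + A n / A (n - 1))) :
    (2 ≤ N → 4 + a ≠ 0) ∧
    (∀ n : ℕ, 2 ≤ n → n ≤ N - 1 → 4 + A n / A (n - 1) ≠ 0) ∧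
    (∀ n : ℕ, 1 ≤ n → n ≤ N →
      A n ≠ 0 ∧
      A n = (-1 : ℝ) ^ (n - 1) * uSeq 1 * a / (uSeq (n : ℤ) + uSeq ((n : ℤ) - 1) * a) ∧
      B n = uSeq (n : ℤ) * b / (uSeq (n : ℤ) + uSeq ((n : ℤ) - 1) * a)) := by
  have hden : ∀ n, 1 ≤ n → n ≤ N → den a n ≠ 0 := hden
  have h4a (h : 2 ≤ N) : 4 + a ≠ 0 :=
    right_ne_zero_of_mul (den_two (a := a) ▸ hden 2 one_le_two h)
  have key (n : ℕ) :
      n + 1 ≤ N → A (n + 1) = closedA a (n + 1) ∧ B (n + 1) = closedB a b (n + 1) := by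
    induction n using Nat.twoStepInduction with
    | zero => exact fun _ => ⟨hA1.trans closedA_one.symm, hB1.trans (closedB_one b).symm⟩
    | one =>
      intro h
      exact ⟨(hA2 h).trans (closedA_two (h4a h)).symm, (hB2 h).trans (closedB_two b (h4a h)).symm⟩
    | more m ih₁ ih₂ =>
      intro h
      have h₁ := hden (m + 1) (by omega) (by omega)
      have h₂ := hden (m + 2) (by omega) (by omega)
      obtain ⟨hA₁, hB₁⟩ := ih₁ (by omega)
      obtain ⟨hA₂, hB₂⟩ := ih₂ (by omega)
      rw [hArec (m + 2) (by omega) (by omega), hBrec (m + 2) (by omega) (by omega),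
        Nat.add_one_sub_one, hA₁, hB₁, hA₂, hB₂]
      exact ⟨(closedA_add_three ha m h₁ h₂).symm, (closedB_add_three ha b m h₁ h₂).symm⟩
  refine ⟨h4a, fun n h2 hn => ?_, fun n h1 hn => ?_⟩
  · obtain ⟨m, rfl⟩ : ∃ m, n = m + 2 := ⟨n - 2, by omega⟩
    have h₁ := hden (m + 1) (by omega) (by omega)
    have h₂ := hden (m + 2) (by omega) (by omega)
    rw [Nat.add_one_sub_one, (key (m + 1) (by omega)).1, (key m (by omega)).1,
      four_add_closedA_ratio ha m h₁ h₂]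
    exact div_ne_zero (hden (m + 3) (by omega) (by omega)) h₂
  · obtain ⟨m, rfl⟩ : ∃ m, n = m + 1 := ⟨n - 1, by omega⟩
    obtain ⟨hA, hB⟩ := key m hn
    exact ⟨hA ▸ closedA_ne_zero ha (hden _ h1 hn), hA, hB⟩

/-- **Closed form of the forward extension coefficients in the uniform-per-patch
case.** With base values `A_1 = a ≠ 0`, `B_1 = b` and the stated recursions,
all denominators are nonzero, `A_n ≠ 0`, and
`A_n = (−1)^{n-1} u_1 a/(u_n + u_{n-1} a)`, `B_n = u_n b/(u_n + u_{n-1} a)`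
for every `1 ≤ n ≤ N`. -/
theorem forward_coefficients_closed_form
    (a b : ℝ) (ha : a ≠ 0) (N : ℕ) (hN : 1 ≤ N)
    (hden : ∀ n : ℕ, 1 ≤ n → n ≤ N → uSeq (n : ℤ) + uSeq ((n : ℤ) - 1) * a ≠ 0)
    (A B : ℕ → ℝ)
    (hA1 : A 1 = a) (hB1 : B 1 = b)
    (hA2 : 2 ≤ N → A 2 = -a / (4 + a))
    (hB2 : 2 ≤ N → B 2 = 4 * b / (4 + a))
    (hArec : ∀ n : ℕ, 2 ≤ n → n ≤ N - 1 →
      A (n + 1) = -A n / (4 + A n / A (n - 1)))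
    (hBrec : ∀ n : ℕ, 2 ≤ n → n ≤ N - 1 →
      B (n + 1) = (4 * B n + (A n / A (n - 1)) * B (n - 1)) / (4 + A n / A (n - 1))) :
    (2 ≤ N → 4 + a ≠ 0) ∧
    (∀ n : ℕ, 2 ≤ n → n ≤ N - 1 → 4 + A n / A (n - 1) ≠ 0) ∧
    (∀ n : ℕ, 1 ≤ n → n ≤ N →
      A n ≠ 0 ∧
      A n = (-1 : ℝ) ^ (n - 1) * uSeq 1 * a / (uSeq (n : ℤ) + uSeq ((n : ℤ) - 1) * a) ∧
      B n = uSeq (n : ℤ) * b / (uSeq (n : ℤ) + uSeq ((n : ℤ) - 1) * a)) :=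
  forward_coefficients_closed_form_general a b ha N hden A B hA1 hB1 hA2 hB2 hArec hBrec
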